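/- arXiv:1201.2580 — 3 statements merged into one kernel-verified Lean document; each statement's English description precedes it below -/
import Mathlib

section
/- Let k = (√6−√2)/4 and α = arccos(1/3). The cubic function g(μ) = (√2/12)μ³ + √3·μ²·k(1−μ) + 3(π−α)·μ·k²(1−μ)² + (4/3)π·k³(1−μ)³, which gives the volume of the Minkowski interpolation μ•T + (1−μ)•B of the unit regular tetrahedron T and the ball B of radius k, attains a value strictly greater than 1.124·(√2/12) at some point μ in the open interval (0.68, 0.69). -/
/-- The smallest inradius of all orthogonal projections of the unit regular tetrahedron. -/
noncomputable def k : ℝ := (Real.sqrt 6 - Real.sqrt 2) / 4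

/-- The dihedral angle of a regular tetrahedron. -/
noncomputable def α : ℝ := Real.arccos (1/3)

/-- The volume of the Minkowski interpolation `μ • T + (1 - μ) • B` of the unit regular
tetrahedron `T` and the ball `B` of radius `k`. -/
noncomputable def g (μ : ℝ) : ℝ :=
  Real.sqrt 2 / 12 * μ ^ 3 + Real.sqrt 3 * μ ^ 2 * (k * (1 - μ)) +
    3 * (Real.pi - α) * μ * (k * (1 - μ)) ^ 2 + 4 / 3 * Real.pi * (k * (1 - μ)) ^ 3

lemma cos_small_lt : Real.cos 1.2325 < 1/3 := by
  have hx : |(1.2325/4 : ℝ)| ≤ 1 := by rw [abs_of_nonneg] <;> norm_num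
  have hb := Real.cos_bound hx
  rw [abs_sub_le_iff] at hb
  obtain ⟨hb1, hb2⟩ := hb
  set c : ℝ := Real.cos (1.2325/4) with hc
  have hclo : (0.952:ℝ) ≤ c := by
    rw [abs_of_nonneg (by norm_num : (0:ℝ) ≤ 1.2325/4)] at hb2
    nlinarith
  have hchi : c ≤ 0.95301 := by
    rw [abs_of_nonneg (by norm_num : (0:ℝ) ≤ 1.2325/4)] at hb1
    nlinarith
  have hrw : Real.cos 1.2325 = 2 * (2 * c ^ 2 - 1) ^ 2 - 1 := by
    have e1 : Real.cos (1.2325/2) = 2 * c ^ 2 - 1 := by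
      rw [hc, ← Real.cos_two_mul]; norm_num
    have e2 : Real.cos (1.2325:ℝ) = 2 * Real.cos (1.2325/2) ^ 2 - 1 := by
      rw [← Real.cos_two_mul]; norm_num
    rw [e2, e1]
  rw [hrw]
  have h1 : 2 * c ^ 2 - 1 ≤ 2 * (0.95301:ℝ) ^ 2 - 1 := by nlinarith
  have h0 : (0.8:ℝ) ≤ 2 * c ^ 2 - 1 := by nlinarith
  nlinarith

lemma alpha_lt : α < 1.2325 := by
  have hπ := Real.pi_gt_d6
  have h1 : Real.cos α = 1/3 := Real.cos_arccos (by norm_num) (by norm_num)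
  have hmem1 : α ∈ Set.Icc 0 Real.pi := ⟨Real.arccos_nonneg _, Real.arccos_le_pi _⟩
  have hmem2 : (1.2325:ℝ) ∈ Set.Icc 0 Real.pi := ⟨by norm_num, by linarith⟩
  by_contra h
  push_neg at h
  rcases eq_or_lt_of_le h with h' | h'
  · have := cos_small_lt
    rw [h', h1] at this
    norm_num at this
  · have := Real.strictAntiOn_cos hmem2 hmem1 h'
    rw [h1] at this
    linarith [cos_small_lt]

theorem interpolation_volume_exceeds_ratio :
    ∃ μ ∈ Set.Ioo (0.68 : ℝ) 0.69, g μ > 1.124 * (Real.sqrt 2 / 12) := by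
  refine ⟨0.685, by constructor <;> norm_num, ?_⟩
  have h2l : (1.4142135:ℝ) ≤ Real.sqrt 2 := by
    rw [show (1.4142135:ℝ) = Real.sqrt (1.4142135^2) by
      rw [Real.sqrt_sq (by norm_num)]]
    exact Real.sqrt_le_sqrt (by norm_num)
  have h2u : Real.sqrt 2 ≤ 1.4142136 := by
    rw [show (1.4142136:ℝ) = Real.sqrt (1.4142136^2) by
      rw [Real.sqrt_sq (by norm_num)]]
    exact Real.sqrt_le_sqrt (by norm_num)
  have h3l : (1.7320508:ℝ) ≤ Real.sqrt 3 := by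
    rw [show (1.7320508:ℝ) = Real.sqrt (1.7320508^2) by
      rw [Real.sqrt_sq (by norm_num)]]
    exact Real.sqrt_le_sqrt (by norm_num)
  have h6l : (2.4494897:ℝ) ≤ Real.sqrt 6 := by
    rw [show (2.4494897:ℝ) = Real.sqrt (2.4494897^2) by
      rw [Real.sqrt_sq (by norm_num)]]
    exact Real.sqrt_le_sqrt (by norm_num)
  have hπ : (3.141592:ℝ) ≤ Real.pi := le_of_lt Real.pi_gt_d6
  have hα : α ≤ 1.2325 := le_of_lt alpha_lt
  have hK : (0.2588190:ℝ) ≤ k := by unfold k; linarith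
  have hKpos : (0:ℝ) < k := by linarith
  have hαπ : α ≤ Real.pi := by unfold α; exact Real.arccos_le_pi _
  calc g 0.685
      = Real.sqrt 2 / 12 * 0.685 ^ 3 + Real.sqrt 3 * 0.685 ^ 2 * (k * (1 - 0.685)) +
        3 * (Real.pi - α) * 0.685 * (k * (1 - 0.685)) ^ 2 +
        4 / 3 * Real.pi * (k * (1 - 0.685)) ^ 3 := rfl
    _ ≥ 1.4142135 / 12 * 0.685 ^ 3 + 1.7320508 * 0.685 ^ 2 * (0.2588190 * (1 - 0.685)) +
        3 * (3.141592 - 1.2325) * 0.685 * (0.2588190 * (1 - 0.685)) ^ 2 +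
        4 / 3 * 3.141592 * (0.2588190 * (1 - 0.685)) ^ 3 := by
        gcongr <;> linarith [hαπ]
    _ > 1.124 * (1.4142136 / 12) := by norm_num
    _ ≥ 1.124 * (Real.sqrt 2 / 12) := by linarith
end

section
/- (Lutwak's containment theorem in the plane) Every convex body K in ℝ² contains a translate of −(1/2)•K; that is, there exists a vector v ∈ ℝ² such that (−1/2)•K + v ⊆ K. -/
open scoped Pointwise

theorem lutwak_containment_plane (K : Set (EuclideanSpace ℝ (Fin 2)))
    (hcp : IsCompact K) (hcv : Convex ℝ K) (hint : (interior K).Nonempty) :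
    ∃ v : EuclideanSpace ℝ (Fin 2), v +ᵥ ((-(1/2) : ℝ) • K) ⊆ K := by
  classical
  have hmid : ∀ a b : EuclideanSpace ℝ (Fin 2), a ∈ K → b ∈ K →
      (1/2 : ℝ) • a + (1/2 : ℝ) • b ∈ K := by
    intro a b ha hb
    exact hcv ha hb (by norm_num) (by norm_num) (by norm_num)
  set F : K → Set (EuclideanSpace ℝ (Fin 2)) :=
    fun x => ((1/2 : ℝ) • (x : EuclideanSpace ℝ (Fin 2))) +ᵥ K with hF
  have hdim : Module.finrank ℝ (EuclideanSpace ℝ (Fin 2)) = 2 := by simp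
  have h_inter : ∀ I : Finset K, I.card ≤ Module.finrank ℝ (EuclideanSpace ℝ (Fin 2)) + 1 →
      (⋂ i ∈ I, F i).Nonempty := by
    intro I hcard
    rw [hdim] at hcard
    have hmem : ∀ (v : EuclideanSpace ℝ (Fin 2)),
        (∀ i ∈ I, v - (1/2 : ℝ) • (i : EuclideanSpace ℝ (Fin 2)) ∈ K) → v ∈ ⋂ i ∈ I, F i := by
      intro v hv
      simp only [Set.mem_iInter]
      intro i hi
      rw [hF, Set.mem_vadd_set_iff_neg_vadd_mem]
      have := hv i hi
      simpa [vadd_eq_add, sub_eq_neg_add] using this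
    interval_cases h : I.card
    · rw [Finset.card_eq_zero] at h
      subst h
      simp
    · rw [Finset.card_eq_one] at h
      obtain ⟨a, rfl⟩ := h
      refine ⟨(1/2 : ℝ) • (a : EuclideanSpace ℝ (Fin 2)) + (a : EuclideanSpace ℝ (Fin 2)),
        hmem _ ?_⟩
      intro i hi
      simp only [Finset.mem_singleton] at hi
      rw [hi]
      simpa using a.2
    · rw [Finset.card_eq_two] at h
      obtain ⟨a, b, hab, rfl⟩ := h
      refine ⟨(1/2 : ℝ) • (a : EuclideanSpace ℝ (Fin 2)) +
        ((1/2 : ℝ) • (a : EuclideanSpace ℝ (Fin 2)) +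
         (1/2 : ℝ) • (b : EuclideanSpace ℝ (Fin 2))), hmem _ ?_⟩
      intro i hi
      simp only [Finset.mem_insert, Finset.mem_singleton] at hi
      rcases hi with h' | h' <;> rw [h']
      · have := hmid _ _ a.2 b.2
        convert this using 1
        abel
      · have := a.2
        convert this using 1
        module
    · rw [Finset.card_eq_three] at h
      obtain ⟨a, b, c, hab, hac, hbc, rfl⟩ := h
      refine ⟨(1/2 : ℝ) • (a : EuclideanSpace ℝ (Fin 2)) +
        (1/2 : ℝ) • (b : EuclideanSpace ℝ (Fin 2)) +
        (1/2 : ℝ) • (c : EuclideanSpace ℝ (Fin 2)), hmem _ ?_⟩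
      intro i hi
      simp only [Finset.mem_insert, Finset.mem_singleton] at hi
      rcases hi with h' | h' | h' <;> rw [h']
      · have := hmid _ _ b.2 c.2
        convert this using 1; abel
      · have := hmid _ _ a.2 c.2
        convert this using 1; abel
      · have := hmid _ _ a.2 b.2
        convert this using 1; abel
  have h := Convex.helly_theorem_compact' (𝕜 := ℝ)
    (fun i => (hcv.vadd _ : Convex ℝ (F i)))
    (fun i => (hcp.vadd _ : IsCompact (F i))) h_inter
  obtain ⟨v, hv⟩ := h
  refine ⟨v, ?_⟩
  rintro y ⟨w, ⟨x, hx, rfl⟩, rfl⟩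
  have hvx : v ∈ F ⟨x, hx⟩ := Set.mem_iInter.mp hv ⟨x, hx⟩
  rw [hF, Set.mem_vadd_set_iff_neg_vadd_mem] at hvx
  convert hvx using 1
  simp [vadd_eq_add]
  module
end

section
/- For n ≥ 2, if A and B are convex bodies in ℝⁿ such that A can hide behind B, then vol(A) ≤ (n/(n−1))ⁿ · vol(B). -/
open scoped Pointwise
open MeasureTheory

/-- Orthogonal projection of a point onto the hyperplane `u^⊥`. -/
noncomputable def proj {n : ℕ} (u x : EuclideanSpace ℝ (Fin n)) : EuclideanSpace ℝ (Fin n) :=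
  (Submodule.orthogonalProjectionOnto (ℝ ∙ u)ᗮ x : EuclideanSpace ℝ (Fin n))

/-- `A` can hide behind `B`: for every unit direction `u` there is a translation vector in
`u^⊥` moving the shadow of `A` inside the shadow of `B`. -/
def HidesBehind {n : ℕ} (A B : Set (EuclideanSpace ℝ (Fin n))) : Prop :=
  ∀ u : EuclideanSpace ℝ (Fin n), ‖u‖ = 1 →
    ∃ v ∈ (ℝ ∙ u)ᗮ, v +ᵥ (proj u '' A) ⊆ proj u '' B

/-!
Hiding yields an inequality of support functions on hyperplanes: if `⟪u, z⟫ = 0` then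
`h_A z + ⟪v, z⟫ ≤ h_B z` for some `v` depending on `u` only. Given `z₀, …, zₙ` summing to zero,
for each `m` the `n` vectors `n • zᵢ + z_m` (`i ≠ m`) sum to zero, so they lie in a common
hyperplane and the `v`-terms cancel. Summing over `m` and using sublinearity of support functions
gives `(n - 1) ∑ h_A zᵢ ≤ n ∑ h_B zᵢ`. By Hahn–Banach separation in `Eⁿ⁺¹` together with Helly's
theorem, this inequality against `C = (n / (n - 1)) • B` forces `A` into a translate of `C`.
-/

open scoped RealInnerProductSpace
open Module

section SupportFunction

variable {E : Type*} [NormedAddCommGroup E] [InnerProductSpace ℝ E] {K : Set E}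

noncomputable def supportFun (K : Set E) (w : E) : ℝ :=
  sSup ((fun x => ⟪x, w⟫) '' K)

theorem inner_le_supportFun (hK : IsCompact K) {x : E} (hx : x ∈ K) (w : E) :
    ⟪x, w⟫ ≤ supportFun K w :=
  le_csSup (hK.bddAbove_image (by fun_prop)) ⟨x, hx, rfl⟩

theorem supportFun_le (hK : K.Nonempty) {w : E} {c : ℝ} (h : ∀ x ∈ K, ⟪x, w⟫ ≤ c) :
    supportFun K w ≤ c :=
  csSup_le (hK.image _) (Set.forall_mem_image.2 h)

theorem exists_supportFun_eq (hK : IsCompact K) (hne : K.Nonempty) (w : E) :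
    ∃ x ∈ K, supportFun K w = ⟪x, w⟫ := by
  obtain ⟨x, hx, hmax⟩ :=
    hK.exists_isMaxOn hne (f := fun y => ⟪y, w⟫) (by fun_prop)
  exact ⟨x, hx, le_antisymm (supportFun_le hne hmax) (inner_le_supportFun hK hx w)⟩

theorem supportFun_add_le (hK : IsCompact K) (hne : K.Nonempty) (w w' : E) :
    supportFun K (w + w') ≤ supportFun K w + supportFun K w' := by
  obtain ⟨x, hx, h⟩ := exists_supportFun_eq hK hne (w + w')
  rw [h, inner_add_right]
  exact add_le_add (inner_le_supportFun hK hx w) (inner_le_supportFun hK hx w')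

theorem supportFun_sum_le (hK : IsCompact K) (hne : K.Nonempty) {ι : Type*} (s : Finset ι)
    (w : ι → E) : supportFun K (∑ i ∈ s, w i) ≤ ∑ i ∈ s, supportFun K (w i) :=
  have hzero : supportFun K 0 = 0 := by
    obtain ⟨x, -, h⟩ := exists_supportFun_eq hK hne 0
    rw [h, inner_zero_right]
  Finset.le_sum_of_subadditive _ hzero.le (supportFun_add_le hK hne) s w

theorem supportFun_smul (hK : IsCompact K) (hne : K.Nonempty) {c : ℝ} (hc : 0 ≤ c) (w : E) :
    supportFun K (c • w) = c * supportFun K w := by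
  obtain ⟨x, hx, h⟩ := exists_supportFun_eq hK hne w
  refine le_antisymm (supportFun_le hne fun y hy => ?_) ?_
  · rw [real_inner_smul_right]
    exact mul_le_mul_of_nonneg_left (inner_le_supportFun hK hy w) hc
  · rw [h, ← real_inner_smul_right]
    exact inner_le_supportFun hK hx _

theorem supportFun_smul_set (hK : IsCompact K) (hne : K.Nonempty) {c : ℝ} (hc : 0 ≤ c)
    (w : E) : supportFun (c • K) w = c * supportFun K w := by
  rw [← supportFun_smul hK hne hc]
  simp only [supportFun, ← Set.image_smul, Set.image_image, real_inner_smul_left,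
    real_inner_smul_right]

end SupportFunction

section Separation

variable {E : Type*} [NormedAddCommGroup E] [InnerProductSpace ℝ E] {ι : Type*} [Fintype ι]

theorem StrongDual.exists_eq_sum_inner [CompleteSpace E] (f : StrongDual ℝ (ι → E)) :
    ∃ z : ι → E, ∀ x, f x = ∑ i, ⟪z i, x i⟫ := by
  classical
  refine ⟨fun i => (InnerProductSpace.toDual ℝ E).symm
    (f.comp (ContinuousLinearMap.single ℝ (fun _ => E) i)), fun x => ?_⟩
  conv_lhs => rw [← Finset.univ_sum_single x]
  simp [InnerProductSpace.toDual_symm_apply]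

theorem eq_zero_of_forall_lt_inner {w : E} {v : ℝ} (h : ∀ t, v < ⟪w, t⟫) : w = 0 := by
  by_contra hw
  have := h (((v - 1) / ‖w‖ ^ 2) • w)
  rw [real_inner_smul_right, real_inner_self_eq_norm_sq,
    div_mul_cancel₀ _ (by positivity)] at this
  linarith

theorem exists_forall_sub_mem_of_sum_inner_le [FiniteDimensional ℝ E] {C : Set E}
    (hC : IsCompact C) (hCc : Convex ℝ C) (hCne : C.Nonempty) (a : ι → E)
    (h : ∀ z : ι → E, ∑ i, z i = 0 → ∑ i, ⟪a i, z i⟫ ≤ ∑ i, supportFun C (z i)) :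
    ∃ t, ∀ i, a i - t ∈ C := by
  -- Otherwise `-a + Cᶥ` misses the diagonal. A separating functional `∑ i, ⟪z i, ·⟫` is bounded
  -- below on the diagonal, so `∑ i, z i = 0`; evaluated where each `⟪·, z i⟫` peaks on `C`, it
  -- contradicts `h`.
  by_contra hsep
  let D : Submodule ℝ (ι → E) := LinearMap.range (LinearMap.pi fun _ => LinearMap.id)
  have hdisj : Disjoint (-a +ᵥ Set.univ.pi fun _ => C) (D : Set (ι → E)) := by
    rw [Set.disjoint_left]
    rintro x hx ⟨t, rfl⟩
    rw [Set.mem_vadd_set_iff_neg_vadd_mem] at hx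
    exact hsep ⟨-t, fun i => by simpa [sub_eq_add_neg] using hx i trivial⟩
  obtain ⟨f, u, v, hfs, huv, hfD⟩ := geometric_hahn_banach_compact_closed
    ((convex_pi fun _ _ => hCc).vadd _) ((isCompact_univ_pi fun _ => hC).vadd _)
    D.convex D.closed_of_finiteDimensional hdisj
  obtain ⟨z, hz⟩ := f.exists_eq_sum_inner
  have hzsum : ∑ i, z i = 0 := eq_zero_of_forall_lt_inner (v := v) fun t => by
    simpa [hz, ← sum_inner] using hfD _ ⟨t, rfl⟩
  have hv : v < 0 := by simpa using hfD 0 D.zero_mem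
  choose c hcC hc using fun i => exists_supportFun_eq hC hCne (z i)
  have hlt := hfs (-a + c) (Set.vadd_mem_vadd_set fun i _ => hcC i)
  simp only [hz, Pi.add_apply, Pi.neg_apply, inner_add_right, inner_neg_right,
    Finset.sum_add_distrib, Finset.sum_neg_distrib] at hlt
  have := h z hzsum
  simp only [hc, real_inner_comm] at this hlt
  linarith

theorem exists_vadd_superset_of_forall_fin [FiniteDimensional ℝ E] {A C : Set E}
    (hC : IsCompact C) (hCc : Convex ℝ C)
    (h : ∀ a : Fin (finrank ℝ E + 1) → E, (∀ i, a i ∈ A) → ∃ t, ∀ i, a i - t ∈ C) :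
    ∃ t : E, A ⊆ t +ᵥ C := by
  -- Helly's theorem for the sets `a +ᵥ -C`, `a ∈ A`. For a subfamily `I` of at most
  -- `finrank ℝ E + 1` of them, `σ` lists `I` with repetitions as a `Fin (finrank ℝ E + 1)`-tuple.
  have hmem : ∀ a t : E, t ∈ a +ᵥ -C ↔ a - t ∈ C := fun a t => by
    simp [Set.mem_vadd_set_iff_neg_vadd_mem, neg_add_eq_sub]
  have hfin : ∀ I : Finset A, I.card ≤ finrank ℝ E + 1 → (⋂ a ∈ I, (a : E) +ᵥ -C).Nonempty := by
    intro I hI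
    rcases I.eq_empty_or_nonempty with rfl | ⟨a₀, ha₀⟩
    · simp
    have : Nonempty I := ⟨⟨a₀, ha₀⟩⟩
    set σ := Function.invFun fun i : I => Fin.castLE hI (I.equivFin i)
    have hσ : σ.Surjective := Function.invFun_surjective
      ((Fin.castLE_injective hI).comp I.equivFin.injective)
    obtain ⟨t, ht⟩ := h (fun j => (σ j : A)) fun j => (σ j : A).2
    refine ⟨t, Set.mem_iInter₂.2 fun a ha => (hmem a t).2 ?_⟩
    obtain ⟨j, hj⟩ := hσ ⟨a, ha⟩
    simpa [hj] using ht j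
  obtain ⟨t, ht⟩ := Convex.helly_theorem_compact' (fun _ => hCc.neg.vadd _)
    (fun _ => hC.neg.vadd _) hfin
  exact ⟨t, fun a ha => ⟨a - t, (hmem a t).1 (Set.mem_iInter.1 ht ⟨a, ha⟩), add_sub_cancel t a⟩⟩

theorem exists_vadd_superset_of_sum_supportFun_le [FiniteDimensional ℝ E] {A C : Set E}
    (hA : IsCompact A) (hC : IsCompact C) (hCc : Convex ℝ C) (hCne : C.Nonempty)
    (h : ∀ z : Fin (finrank ℝ E + 1) → E, ∑ i, z i = 0 →
      ∑ i, supportFun A (z i) ≤ ∑ i, supportFun C (z i)) :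
    ∃ t : E, A ⊆ t +ᵥ C :=
  exists_vadd_superset_of_forall_fin hC hCc fun a ha =>
    exists_forall_sub_mem_of_sum_inner_le hC hCc hCne a fun z hz =>
      (Finset.sum_le_sum fun i _ => inner_le_supportFun hA (ha i) (z i)).trans (h z hz)

end Separation

section Hyperplanes

variable {E : Type*} [NormedAddCommGroup E] [InnerProductSpace ℝ E]

theorem exists_norm_eq_one_forall_inner_eq_zero {ι : Type*} (s : Finset ι) (y : ι → E)
    (hs : s.card < finrank ℝ E) : ∃ u : E, ‖u‖ = 1 ∧ ∀ i ∈ s, ⟪u, y i⟫ = 0 := by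
  classical
  set V := Submodule.span ℝ ((s.image y : Finset E) : Set E)
  have hV : V ≠ ⊤ := fun hV => by
    have : finrank ℝ V ≤ s.card :=
      (finrank_span_finset_le_card (s.image y)).trans Finset.card_image_le
    rw [hV, finrank_top] at this
    omega
  obtain ⟨u, hu, hu0⟩ :=
    Submodule.exists_mem_ne_zero_of_ne_bot (mt Submodule.orthogonal_eq_bot_iff.1 hV)
  refine ⟨‖u‖⁻¹ • u, norm_smul_inv_norm hu0, fun i hi => ?_⟩
  rw [real_inner_smul_left, Submodule.inner_left_of_mem_orthogonal
    (Submodule.subset_span (Finset.mem_coe.2 (Finset.mem_image_of_mem y hi))) hu, mul_zero]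

def SupportDominatedOnHyperplanes (A B : Set E) : Prop :=
  ∀ u : E, ‖u‖ = 1 → ∃ v : E, ∀ z, ⟪u, z⟫ = 0 → supportFun A z + ⟪v, z⟫ ≤ supportFun B z

variable {A B : Set E}

theorem SupportDominatedOnHyperplanes.sum_le {ι : Type*}
    (hAB : SupportDominatedOnHyperplanes A B) {s : Finset ι} (hs : s.card ≤ finrank ℝ E)
    {y : ι → E} (hy : ∑ i ∈ s, y i = 0) :
    ∑ i ∈ s, supportFun A (y i) ≤ ∑ i ∈ s, supportFun B (y i) := by
  classical
  rcases s.eq_empty_or_nonempty with rfl | ⟨i₀, hi₀⟩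
  · simp
  obtain ⟨u, hu, hperp⟩ := exists_norm_eq_one_forall_inner_eq_zero (s.erase i₀) y
    (by rw [Finset.card_erase_of_mem hi₀]; have := s.card_pos.2 ⟨i₀, hi₀⟩; omega)
  have hperp' : ∀ i ∈ s, ⟪u, y i⟫ = 0 := by
    have hsplit : ⟪u, y i₀⟫ + ∑ i ∈ s.erase i₀, ⟪u, y i⟫ = 0 := by
      rw [← inner_sum, ← inner_add_right, Finset.add_sum_erase s y hi₀, hy, inner_zero_right]
    rw [Finset.sum_eq_zero hperp, add_zero] at hsplit
    intro i hi
    by_cases h : i = i₀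
    · rwa [h]
    · exact hperp i (Finset.mem_erase.2 ⟨h, hi⟩)
  obtain ⟨v, hv⟩ := hAB u hu
  have := Finset.sum_le_sum fun i hi => hv (y i) (hperp' i hi)
  rwa [Finset.sum_add_distrib, ← inner_sum, hy, inner_zero_right, add_zero] at this

theorem SupportDominatedOnHyperplanes.mul_sum_le [Nontrivial E] [FiniteDimensional ℝ E]
    (hAB : SupportDominatedOnHyperplanes A B) (hA : IsCompact A) (hAne : A.Nonempty)
    (hB : IsCompact B) (hBne : B.Nonempty) {ι : Type*} [Fintype ι]
    (hι : Fintype.card ι = finrank ℝ E + 1) (z : ι → E) (hz : ∑ i, z i = 0) :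
    ((finrank ℝ E : ℝ) - 1) * ∑ i, supportFun A (z i) ≤ finrank ℝ E * ∑ i, supportFun B (z i) := by
  classical
  set n := finrank ℝ E
  have hn : (1 : ℝ) ≤ n := by exact_mod_cast Module.finrank_pos
  set y : ι → ι → E := fun m i => (n : ℝ) • z i + z m
  have hcard (m : ι) : (Finset.univ.erase m).card = n := by simp [hι]
  have hsum_erase (m : ι) : ∑ i ∈ Finset.univ.erase m, z i = -z m := by
    rw [Finset.sum_erase_eq_sub (Finset.mem_univ m), hz, zero_sub]
  have hfamily (m : ι) :
      ∑ i ∈ Finset.univ.erase m, supportFun A (y m i)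
        ≤ ∑ i ∈ Finset.univ.erase m, supportFun B (y m i) := by
    refine hAB.sum_le (hcard m).le ?_
    simp only [y, Finset.sum_add_distrib, ← Finset.smul_sum, hsum_erase, Finset.sum_const, hcard,
      ← Nat.cast_smul_eq_nsmul ℝ, smul_neg, neg_add_cancel]
  have hlower : ((n : ℝ) ^ 2 - 1) * ∑ i, supportFun A (z i)
      ≤ ∑ m, ∑ i ∈ Finset.univ.erase m, supportFun A (y m i) := by
    rw [Finset.sum_comm' (t' := Finset.univ) (s' := fun i => Finset.univ.erase i)
      (by simp [eq_comm]), Finset.mul_sum]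
    refine Finset.sum_le_sum fun i _ => ?_
    have hcol : ∑ m ∈ Finset.univ.erase i, y m i = ((n : ℝ) ^ 2 - 1) • z i := by
      simp only [y, Finset.sum_add_distrib, hsum_erase, Finset.sum_const, hcard,
        ← Nat.cast_smul_eq_nsmul ℝ, smul_smul, sub_smul, one_smul, sq]
      abel
    rw [← supportFun_smul hA hAne (by nlinarith), ← hcol]
    exact supportFun_sum_le hA hAne _ _
  have hupper : ∑ m, ∑ i ∈ Finset.univ.erase m, supportFun B (y m i)
      ≤ ((n : ℝ) + 1) * (n * ∑ i, supportFun B (z i)) := by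
    have hrow (m : ι) : ∑ i ∈ Finset.univ.erase m, supportFun B (y m i)
        ≤ n * ∑ i, supportFun B (z i) := calc
      _ ≤ ∑ i ∈ Finset.univ.erase m, (n * supportFun B (z i) + supportFun B (z m)) :=
        Finset.sum_le_sum fun i _ => (supportFun_add_le hB hBne _ _).trans_eq
          (by rw [supportFun_smul hB hBne (by linarith)])
      _ = n * ∑ i, supportFun B (z i) := by
        rw [Finset.sum_add_distrib, ← Finset.mul_sum, Finset.sum_const, hcard, nsmul_eq_mul,
          Finset.sum_erase_eq_sub (Finset.mem_univ m)]
        ring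
    calc _ ≤ ∑ _m : ι, n * ∑ i, supportFun B (z i) := Finset.sum_le_sum fun m _ => hrow m
      _ = _ := by simp [hι]
  have := (hlower.trans (Finset.sum_le_sum fun m _ => hfamily m)).trans hupper
  refine le_of_mul_le_mul_left ?_ (by linarith : (0 : ℝ) < n + 1)
  linear_combination this

end Hyperplanes

theorem HidesBehind.supportDominatedOnHyperplanes {n : ℕ} {A B : Set (EuclideanSpace ℝ (Fin n))}
    (hAB : HidesBehind A B) (hA : A.Nonempty) (hB : IsCompact B) :
    SupportDominatedOnHyperplanes A B := by
  intro u hu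
  obtain ⟨v, -, hv⟩ := hAB u hu
  refine ⟨v, fun z hz => ?_⟩
  have hproj (x : EuclideanSpace ℝ (Fin n)) : ⟪proj u x, z⟫ = ⟪x, z⟫ :=
    Submodule.inner_orthogonalProjectionOnto_eq_of_mem_right
      ⟨z, Submodule.mem_orthogonal_singleton_iff_inner_right.2 hz⟩ x
  rw [← le_sub_iff_add_le]
  refine supportFun_le hA fun a ha => ?_
  obtain ⟨b, hb, hba⟩ := hv (Set.vadd_mem_vadd_set (Set.mem_image_of_mem _ ha))
  have hb' : ⟪b, z⟫ = ⟪v, z⟫ + ⟪a, z⟫ := by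
    rw [← hproj, hba, vadd_eq_add, inner_add_left, hproj]
  linarith [inner_le_supportFun hB hb z]

theorem hiding_volume_bound_general {n : ℕ} (hn : 2 ≤ n)
    (A B : Set (EuclideanSpace ℝ (Fin n)))
    (hAcp : IsCompact A) (hAint : (interior A).Nonempty)
    (hBcp : IsCompact B) (hBcv : Convex ℝ B) (hBint : (interior B).Nonempty)
    (hAB : HidesBehind A B) :
    volume A ≤ ENNReal.ofReal (((n : ℝ) / ((n : ℝ) - 1)) ^ n) * volume B := by
  have hAne : A.Nonempty := hAint.mono interior_subset
  have hBne : B.Nonempty := hBint.mono interior_subset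
  have hdim : finrank ℝ (EuclideanSpace ℝ (Fin n)) = n := finrank_euclideanSpace_fin
  have hn' : (1 : ℝ) < n := by exact_mod_cast hn
  have : Nontrivial (EuclideanSpace ℝ (Fin n)) := by
    rw [← Module.finrank_pos_iff (R := ℝ), hdim]; omega
  set r : ℝ := n / (n - 1)
  have hr : 0 ≤ r := by positivity
  obtain ⟨t, ht⟩ : ∃ t, A ⊆ t +ᵥ r • B := by
    refine exists_vadd_superset_of_sum_supportFun_le hAcp (hBcp.smul r) (hBcv.smul r)
      hBne.smul_set fun z hz => ?_
    have := (hAB.supportDominatedOnHyperplanes hAne hBcp).mul_sum_le hAcp hAne hBcp hBne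
      (Fintype.card_fin _) z hz
    simp_rw [supportFun_smul_set hBcp hBne hr, ← Finset.mul_sum, hdim] at this ⊢
    rw [div_mul_eq_mul_div, le_div_iff₀ (by linarith)]
    linarith
  calc volume A ≤ volume (t +ᵥ r • B) := measure_mono ht
    _ = ENNReal.ofReal (r ^ n) * volume B := by
      rw [measure_vadd, Measure.addHaar_smul, hdim, abs_of_nonneg (by positivity)]

theorem hiding_volume_bound {n : ℕ} (hn : 2 ≤ n)
    (A B : Set (EuclideanSpace ℝ (Fin n)))
    (hAcp : IsCompact A) (hAcv : Convex ℝ A) (hAint : (interior A).Nonempty)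
    (hBcp : IsCompact B) (hBcv : Convex ℝ B) (hBint : (interior B).Nonempty)
    (hAB : HidesBehind A B) :
    volume A ≤ ENNReal.ofReal (((n : ℝ) / ((n : ℝ) - 1)) ^ n) * volume B :=
  hiding_volume_bound_general hn A B hAcp hAint hBcp hBcv hBint hAB
end
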